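/- Let X be a Banach function space over ℝⁿ, and assume that the Hardy–Littlewood maximal operator M is bounded on X. Then M is bounded on (X')^r for all r ∈ (0,1), where X' is the associate space of X and (X')^r has norm ‖f‖_{(X')^r} := ‖|f|^{1/r}‖_{X'}^r. -/

import Mathlib

open MeasureTheory ENNReal Filter Set
open scoped NNReal ENNReal

noncomputable section

/-- The axis-parallel closed cube in `ℝⁿ` with lower corner `a` and side length `h`. -/
def Cube {n : ℕ} (a : Fin n → ℝ) (h : ℝ) : Set (Fin n → ℝ) :=
  {x | ∀ i, x i ∈ Set.Icc (a i) (a i + h)}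

/-- The Hardy–Littlewood maximal operator, acting on nonnegative
(extended-real-valued) measurable functions on `ℝⁿ`:
`Mf(x) = sup_{Q ∋ x} (1/|Q|) ∫_Q f`, the sup over all cubes `Q` containing `x`. -/
def hlMaximal {n : ℕ} (f : (Fin n → ℝ) → ℝ≥0∞) (x : Fin n → ℝ) : ℝ≥0∞ :=
  ⨆ (a : Fin n → ℝ) (h : ℝ) (_ : 0 < h) (_ : x ∈ Cube a h),
    (∫⁻ y in Cube a h, f y) / volume (Cube a h)

/-- The Hardy–Littlewood maximal operator of a real-valued function. -/
def hlMaximalR {n : ℕ} (f : (Fin n → ℝ) → ℝ) : (Fin n → ℝ) → ℝ≥0∞ :=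
  hlMaximal (fun x => (‖f x‖₊ : ℝ≥0∞))

/-- The non-increasing rearrangement `f^*(t) = inf {α : |{|f| > α}| ≤ t}`. -/
def decRearr {n : ℕ} (f : (Fin n → ℝ) → ℝ≥0∞) (t : ℝ≥0∞) : ℝ≥0∞ :=
  sInf {α : ℝ≥0∞ | volume {x | α < f x} ≤ t}

/-- The local maximal operator `m_λ f(x) = sup_{Q ∋ x} (f χ_Q)^*(λ|Q|)`. -/
def locMax {n : ℕ} (lam : ℝ) (f : (Fin n → ℝ) → ℝ≥0∞) (x : Fin n → ℝ) : ℝ≥0∞ :=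
  ⨆ (a : Fin n → ℝ) (h : ℝ) (_ : 0 < h) (_ : x ∈ Cube a h),
    decRearr (Set.indicator (Cube a h) f) (ENNReal.ofReal lam * volume (Cube a h))

/-- A Banach function space over `ℝⁿ`, described (à la Bennett–Sharpley and
Lorist–Nieraeth) by its function norm `ρ` on nonnegative extended-real-valued
functions:  `ρ` is a norm on measurable functions satisfying the ideal property,
the Fatou property and the saturation property. -/
structure BanachFunctionSpace (n : ℕ) where
  ρ : ((Fin n → ℝ) → ℝ≥0∞) → ℝ≥0∞
  congr_ae : ∀ f g, Measurable f → Measurable g → f =ᵐ[volume] g → ρ f = ρ g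
  eq_zero_iff : ∀ f, Measurable f → (ρ f = 0 ↔ f =ᵐ[volume] 0)
  add_le : ∀ f g, Measurable f → Measurable g → ρ (fun x => f x + g x) ≤ ρ f + ρ g
  smul_eq : ∀ (c : ℝ≥0) f, Measurable f → ρ (fun x => (c : ℝ≥0∞) * f x) = (c : ℝ≥0∞) * ρ f
  -- ideal property
  mono : ∀ f g, Measurable f → Measurable g → (∀ᵐ x ∂volume, f x ≤ g x) → ρ f ≤ ρ g
  -- Fatou property
  fatou : ∀ f : ℕ → (Fin n → ℝ) → ℝ≥0∞, (∀ j, Measurable (f j)) →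
    (∀ x, Monotone fun j => f j x) → (⨆ j, ρ (f j)) < ⊤ →
    ρ (fun x => ⨆ j, f j x) = ⨆ j, ρ (f j)
  -- saturation property
  saturation : ∀ E : Set (Fin n → ℝ), MeasurableSet E → 0 < volume E →
    ∃ F, F ⊆ E ∧ MeasurableSet F ∧ 0 < volume F ∧ ρ (Set.indicator F fun _ => 1) < ⊤

/-- The associate (Köthe dual) norm: `‖f‖_{X'} = sup_{‖g‖_X ≤ 1} ∫ |fg|`. -/
def assocNorm {n : ℕ} (N : ((Fin n → ℝ) → ℝ≥0∞) → ℝ≥0∞)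
    (f : (Fin n → ℝ) → ℝ≥0∞) : ℝ≥0∞ :=
  ⨆ (g : (Fin n → ℝ) → ℝ≥0∞) (_ : Measurable g) (_ : N g ≤ 1), ∫⁻ x, f x * g x

/-- The norm of the rescaled space `X^p`: `‖f‖_{X^p} = ‖ |f|^{1/p} ‖_X^p`. -/
def powNorm {n : ℕ} (N : ((Fin n → ℝ) → ℝ≥0∞) → ℝ≥0∞) (p : ℝ)
    (f : (Fin n → ℝ) → ℝ≥0∞) : ℝ≥0∞ :=
  (N fun x => f x ^ (1 / p)) ^ p

/-- Boundedness of the Hardy–Littlewood maximal operator on the space with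
function norm `N`. -/
def MaximalBounded {n : ℕ} (N : ((Fin n → ℝ) → ℝ≥0∞) → ℝ≥0∞) : Prop :=
  ∃ C : ℝ≥0, ∀ f, Measurable f → N (hlMaximal f) ≤ (C : ℝ≥0∞) * N f

/-- The function `φ_X(λ) = inf {‖m_λ f‖_X : ‖f‖_X = 1}`. -/
def phiFn {n : ℕ} (N : ((Fin n → ℝ) → ℝ≥0∞) → ℝ≥0∞) (lam : ℝ) : ℝ≥0∞ :=
  ⨅ (f : (Fin n → ℝ) → ℝ≥0∞) (_ : Measurable f) (_ : N f = 1), N (locMax lam f)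

/-- Unboundedness of `φ_X` on `(0,1)`. -/
def phiUnbounded {n : ℕ} (N : ((Fin n → ℝ) → ℝ≥0∞) → ℝ≥0∞) : Prop :=
  (⨆ lam ∈ Set.Ioo (0 : ℝ) 1, phiFn N lam) = ⊤

/-- Local integrability of a weight (finite integral over every cube). -/
def LocIntegrableW {n : ℕ} (w : (Fin n → ℝ) → ℝ≥0∞) : Prop :=
  ∀ (a : Fin n → ℝ) (h : ℝ), 0 < h → (∫⁻ x in Cube a h, w x) < ⊤

/-- The `A₁` constant `[w]_{A₁} = ‖Mw/w‖_{L^∞}`. -/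
def A1Const {n : ℕ} (w : (Fin n → ℝ) → ℝ≥0∞) : ℝ≥0∞ :=
  essSup (fun x => hlMaximal w x / w x) volume

/-- The (Fujii–Wilson) `A_∞` constant `[w]_{A_∞} = sup_Q (∫_Q M(wχ_Q)) / w(Q)`. -/
def AinfConst {n : ℕ} (w : (Fin n → ℝ) → ℝ≥0∞) : ℝ≥0∞ :=
  ⨆ (a : Fin n → ℝ) (h : ℝ) (_ : 0 < h),
    (∫⁻ x in Cube a h, hlMaximal (Set.indicator (Cube a h) w) x) /
      ∫⁻ x in Cube a h, w x

/-- The `A_p` constant: for `p = 1` it is the `A₁` constant, and for `p > 1` it is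
`[w]_{A_p} = sup_Q ⟨w⟩_Q ⟨w^{-p'/p}⟩_Q^{p/p'}` (note `p'/p = 1/(p-1)` and `p/p' = p-1`). -/
def ApConst {n : ℕ} (p : ℝ) (w : (Fin n → ℝ) → ℝ≥0∞) : ℝ≥0∞ :=
  if p = 1 then A1Const w
  else
    ⨆ (a : Fin n → ℝ) (h : ℝ) (_ : 0 < h),
      ((∫⁻ x in Cube a h, w x) / volume (Cube a h)) *
        ((∫⁻ x in Cube a h, w x ^ (-(p - 1)⁻¹)) / volume (Cube a h)) ^ (p - 1)

/-- `A_p`-regularity of the space with function norm `N`: there are `C₁, C₂ > 0` such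
that every `f` in the space is dominated by an `A_p` weight `w` with `[w]_{A_p} ≤ C₁`
and `‖w‖ ≤ C₂ ‖f‖`. -/
def IsApRegular {n : ℕ} (N : ((Fin n → ℝ) → ℝ≥0∞) → ℝ≥0∞) (p : ℝ) : Prop :=
  ∃ C₁ C₂ : ℝ≥0, 0 < C₁ ∧ 0 < C₂ ∧
    ∀ f, Measurable f → N f < ⊤ →
      ∃ w : (Fin n → ℝ) → ℝ≥0∞, Measurable w ∧ LocIntegrableW w ∧
        (∀ᵐ x ∂volume, f x ≤ w x) ∧ ApConst p w ≤ (C₁ : ℝ≥0∞) ∧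
        N w ≤ (C₂ : ℝ≥0∞) * N f

/-- `A_∞`-regularity of the space with function norm `N`. -/
def IsAinfRegular {n : ℕ} (N : ((Fin n → ℝ) → ℝ≥0∞) → ℝ≥0∞) : Prop :=
  ∃ C₁ C₂ : ℝ≥0, 0 < C₁ ∧ 0 < C₂ ∧
    ∀ f, Measurable f → N f < ⊤ →
      ∃ w : (Fin n → ℝ) → ℝ≥0∞, Measurable w ∧ LocIntegrableW w ∧
        (∀ᵐ x ∂volume, f x ≤ w x) ∧ AinfConst w ≤ (C₁ : ℝ≥0∞) ∧
        N w ≤ (C₂ : ℝ≥0∞) * N f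

/-- The Fefferman–Stein sharp maximal function
`f^#(x) = sup_{Q ∋ x} (1/|Q|) ∫_Q |f - ⟨f⟩_Q|`. -/
def sharpMax {n : ℕ} (f : (Fin n → ℝ) → ℝ) (x : Fin n → ℝ) : ℝ≥0∞ :=
  ⨆ (a : Fin n → ℝ) (h : ℝ) (_ : 0 < h) (_ : x ∈ Cube a h),
    (∫⁻ y in Cube a h,
      (‖f y - (∫ z in Cube a h, f z) / (volume (Cube a h)).toReal‖₊ : ℝ≥0∞)) /
      volume (Cube a h)

/-- Membership in `S₀(ℝⁿ)`: all level sets `{|f| > α}`, `α > 0`, have finite measure. -/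
def MemS0 {n : ℕ} (f : (Fin n → ℝ) → ℝ) : Prop :=
  ∀ α : ℝ, 0 < α → volume {x | α < |f x|} < ⊤

/-- `p`-convexity of a Banach function space. -/
def IsPConvex {n : ℕ} (X : BanachFunctionSpace n) (p : ℝ) : Prop :=
  ∀ f g, Measurable f → Measurable g →
    X.ρ (fun x => (f x ^ p + g x ^ p) ^ (1 / p)) ≤ (X.ρ f ^ p + X.ρ g ^ p) ^ (1 / p)

/-- `q`-concavity of a Banach function space. -/
def IsQConcave {n : ℕ} (X : BanachFunctionSpace n) (q : ℝ) : Prop :=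
  ∀ f g, Measurable f → Measurable g →
    (X.ρ f ^ q + X.ρ g ^ q) ^ (1 / q) ≤ X.ρ (fun x => (f x ^ q + g x ^ q) ^ (1 / q))

section Aux

variable {n : ℕ}

lemma cube_eq_pi (a : Fin n → ℝ) (h : ℝ) :
    Cube a h = Set.univ.pi fun i => Icc (a i) (a i + h) := by
  ext x; simp only [Cube, mem_setOf_eq, Set.mem_pi, mem_univ, forall_true_left, mem_Icc,
    true_implies]

lemma measurableSet_cube (a : Fin n → ℝ) (h : ℝ) : MeasurableSet (Cube a h) := by
  rw [cube_eq_pi]; exact MeasurableSet.univ_pi fun i => measurableSet_Icc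

lemma volume_cube (a : Fin n → ℝ) {h : ℝ} (hh : 0 ≤ h) :
    volume (Cube a h) = ENNReal.ofReal h ^ n := by
  rw [cube_eq_pi, volume_pi_pi]
  simp [Real.volume_Icc]

lemma vol_cube_pos (a : Fin n → ℝ) {h : ℝ} (hh : 0 < h) : 0 < volume (Cube a h) := by
  rw [volume_cube a hh.le]
  positivity

lemma vol_cube_ne_top (a : Fin n → ℝ) {h : ℝ} (hh : 0 ≤ h) : volume (Cube a h) ≠ ⊤ := by
  rw [volume_cube a hh]
  exact (pow_ne_top ofReal_ne_top)

lemma cube_eq_closedBall (a : Fin n → ℝ) {h : ℝ} (hh : 0 ≤ h) :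
    Cube a h = Metric.closedBall (fun i => a i + h / 2) (h / 2) := by
  ext x
  simp only [Metric.mem_closedBall, dist_pi_le_iff (by linarith : (0:ℝ) ≤ h/2), Cube,
    mem_setOf_eq, Real.dist_eq, abs_le, mem_Icc]
  constructor
  · intro hx i; have := hx i; constructor <;> linarith [this.1, this.2]
  · intro hx i; have := hx i; constructor <;> linarith [this.1, this.2]

lemma closedBall_eq_cube (c : Fin n → ℝ) {r : ℝ} (hr : 0 ≤ r) :
    Metric.closedBall c r = Cube (fun i => c i - r) (2 * r) := by
  have e1 : (fun i => (c i - r) + (2*r)/2) = c := by funext i; ring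
  have e2 : (2*r)/2 = r := by ring
  rw [cube_eq_closedBall (fun i => c i - r) (by linarith : (0:ℝ) ≤ 2*r), e1, e2]

lemma avg_le_hlMaximal (f : (Fin n → ℝ) → ℝ≥0∞) {a : Fin n → ℝ} {h : ℝ} {x : Fin n → ℝ}
    (hh : 0 < h) (hx : x ∈ Cube a h) :
    (∫⁻ y in Cube a h, f y) / volume (Cube a h) ≤ hlMaximal f x :=
  le_iSup_of_le a (le_iSup_of_le h (le_iSup_of_le hh (le_iSup_of_le hx le_rfl)))

lemma hlMaximal_le {f : (Fin n → ℝ) → ℝ≥0∞} {x : Fin n → ℝ} {c : ℝ≥0∞}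
    (H : ∀ (a : Fin n → ℝ) (h : ℝ), 0 < h → x ∈ Cube a h →
      (∫⁻ y in Cube a h, f y) / volume (Cube a h) ≤ c) :
    hlMaximal f x ≤ c :=
  iSup_le fun a => iSup_le fun h => iSup_le fun hh => iSup_le fun hx => H a h hh hx

lemma hlMaximal_add_le {f g : (Fin n → ℝ) → ℝ≥0∞} (hf : Measurable f) (x : Fin n → ℝ) :
    hlMaximal (fun y => f y + g y) x ≤ hlMaximal f x + hlMaximal g x := by
  refine hlMaximal_le fun a h hh hx => ?_
  rw [lintegral_add_left hf, ENNReal.add_div]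
  exact add_le_add (avg_le_hlMaximal f hh hx) (avg_le_hlMaximal g hh hx)

lemma hlMaximal_le_const {f : (Fin n → ℝ) → ℝ≥0∞} {c : ℝ≥0∞} (hfc : ∀ y, f y ≤ c)
    (x : Fin n → ℝ) : hlMaximal f x ≤ c := by
  refine hlMaximal_le fun a h hh hx => ?_
  have h1 : (∫⁻ y in Cube a h, f y) ≤ volume (Cube a h) * c := by
    refine le_trans (lintegral_mono hfc) ?_
    simp [setLIntegral_const, mul_comm]
  exact ENNReal.div_le_of_le_mul (h1.trans_eq (mul_comm _ _))

lemma hlMaximal_mono {f g : (Fin n → ℝ) → ℝ≥0∞} (hfg : ∀ y, f y ≤ g y) (x : Fin n → ℝ) :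
    hlMaximal f x ≤ hlMaximal g x := by
  refine hlMaximal_le fun a h hh hx => ?_
  exact le_trans (ENNReal.div_le_div (lintegral_mono hfg) le_rfl) (avg_le_hlMaximal g hh hx)

lemma exists_rat_cube (a : Fin n → ℝ) {h : ℝ} (hh : 0 < h) {ε : ℝ} (hε : 0 < ε) :
    ∃ (b : Fin n → ℚ) (k : ℚ), 0 < ((k : ℝ)) ∧
      Cube a h ⊆ Cube (fun i => (b i : ℝ)) (k : ℝ) ∧
      volume (Cube (fun i => (b i : ℝ)) (k : ℝ)) ≤ volume (Cube a h) + ENNReal.ofReal ε := by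
  have hcont : ContinuousAt (fun t : ℝ => t ^ n) h := (continuous_pow n).continuousAt
  rw [Metric.continuousAt_iff] at hcont
  obtain ⟨δ, hδ, hδ'⟩ := hcont ε hε
  obtain ⟨k, hk1, hk2⟩ := exists_rat_btwn (lt_add_of_pos_right h (by positivity : (0:ℝ) < δ/2))
  have hkh : h < (k:ℝ) := hk1
  have hkpos : 0 < (k:ℝ) := hh.trans hk1
  have hbi : ∀ i, ∃ q : ℚ, a i - ((k:ℝ) - h) < q ∧ (q:ℝ) < a i := fun i =>
    exists_rat_btwn (by linarith)
  choose b hb1 hb2 using hbi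
  refine ⟨b, k, hkpos, ?_, ?_⟩
  · intro x hx i
    have := hx i
    simp only [mem_Icc] at this ⊢
    constructor
    · linarith [hb2 i, this.1]
    · linarith [hb1 i, this.2]
  · have hkn : (k:ℝ) ^ n < h ^ n + ε := by
      have := hδ' (x := (k:ℝ)) (by rw [Real.dist_eq, abs_of_pos (by linarith)]; linarith)
      rw [Real.dist_eq] at this
      have := abs_lt.mp this
      linarith [this.2]
    rw [volume_cube _ hkpos.le, volume_cube a hh.le]
    rw [← ENNReal.ofReal_pow hkpos.le, ← ENNReal.ofReal_pow hh.le,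
      ← ENNReal.ofReal_add (by positivity) hε.le]
    exact ENNReal.ofReal_le_ofReal hkn.le

def hlMaximalQ (f : (Fin n → ℝ) → ℝ≥0∞) (x : Fin n → ℝ) : ℝ≥0∞ :=
  ⨆ (b : Fin n → ℚ) (k : ℚ) (_ : 0 < ((k:ℝ))) (_ : x ∈ Cube (fun i => (b i : ℝ)) (k : ℝ)),
    (∫⁻ y in Cube (fun i => (b i : ℝ)) (k : ℝ), f y) /
      volume (Cube (fun i => (b i : ℝ)) (k : ℝ))

lemma measurable_hlMaximalQ (f : (Fin n → ℝ) → ℝ≥0∞) : Measurable (hlMaximalQ f) := by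
  apply Measurable.iSup; intro b
  apply Measurable.iSup; intro k
  by_cases hk : 0 < ((k:ℝ))
  · simp only [hk, iSup_pos]
    have : (fun x => ⨆ (_ : x ∈ Cube (fun i => (b i : ℝ)) (k : ℝ)),
        (∫⁻ y in Cube (fun i => (b i : ℝ)) (k : ℝ), f y) /
          volume (Cube (fun i => (b i : ℝ)) (k : ℝ)))
        = (Cube (fun i => (b i : ℝ)) (k : ℝ)).indicator
          (fun _ => (∫⁻ y in Cube (fun i => (b i : ℝ)) (k : ℝ), f y) /
            volume (Cube (fun i => (b i : ℝ)) (k : ℝ))) := by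
      ext x; by_cases hx : x ∈ Cube (fun i => (b i : ℝ)) (k : ℝ) <;> simp [hx]
    rw [this]
    exact Measurable.indicator measurable_const (measurableSet_cube _ _)
  · simp only [hk, iSup_false, iSup_bot]
    exact measurable_const

lemma hlMaximalQ_le (f : (Fin n → ℝ) → ℝ≥0∞) (x : Fin n → ℝ) :
    hlMaximalQ f x ≤ hlMaximal f x :=
  iSup_le fun b => iSup_le fun k => iSup_le fun hk => iSup_le fun hx =>
    avg_le_hlMaximal f hk hx

lemma hlMaximal_eq_Q (f : (Fin n → ℝ) → ℝ≥0∞) (x : Fin n → ℝ) :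
    hlMaximal f x = hlMaximalQ f x := by
  refine le_antisymm ?_ (hlMaximalQ_le f x)
  refine hlMaximal_le fun a h hh hx => ?_
  set S := hlMaximalQ f x with hS
  set c := ∫⁻ y in Cube a h, f y with hc
  set v := volume (Cube a h) with hv
  have key : ∀ j : ℕ, c / (v + ENNReal.ofReal (1 / (j + 1))) ≤ S := by
    intro j
    have hεp : (0:ℝ) < 1 / (j + 1) := by positivity
    obtain ⟨b, k, hk, hsub, hvol⟩ := exists_rat_cube a hh hεp
    have hxk : x ∈ Cube (fun i => (b i : ℝ)) (k : ℝ) := hsub hx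
    have h1 : c ≤ ∫⁻ y in Cube (fun i => (b i : ℝ)) (k : ℝ), f y :=
      lintegral_mono' (Measure.restrict_mono hsub le_rfl) le_rfl
    refine le_trans (ENNReal.div_le_div h1 hvol) ?_
    exact le_iSup_of_le b (le_iSup_of_le k (le_iSup_of_le hk (le_iSup_of_le hxk le_rfl)))
  by_cases hStop : S = ⊤
  · simp [hStop]
  have hv0 : v ≠ 0 := (vol_cube_pos a hh).ne'
  have hvt : v ≠ ⊤ := vol_cube_ne_top a hh.le
  have hcle : ∀ j : ℕ, c ≤ S * v + S * ENNReal.ofReal (1 / (j + 1)) := by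
    intro j
    have := key j
    rw [ENNReal.div_le_iff_le_mul
      (Or.inl (by simp [pos_iff_ne_zero.mp (vol_cube_pos a hh)]; intro _; positivity))
      (Or.inl (ENNReal.add_ne_top.mpr ⟨hvt, ENNReal.ofReal_ne_top⟩))] at this
    calc c ≤ S * (v + ENNReal.ofReal (1 / (j + 1))) := this
    _ = S * v + S * ENNReal.ofReal (1 / (j + 1)) := by rw [mul_add]
  have htend : Tendsto (fun j : ℕ => S * v + S * ENNReal.ofReal (1 / (j + 1))) atTop
      (nhds (S * v + S * 0)) := by
    refine Tendsto.const_add _ ?_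
    refine ENNReal.Tendsto.const_mul ?_ (Or.inr hStop)
    have : Tendsto (fun j : ℕ => (1 : ℝ) / (j + 1)) atTop (nhds 0) :=
      tendsto_one_div_add_atTop_nhds_zero_nat
    have := (ENNReal.continuous_ofReal.tendsto 0).comp this
    simpa [Function.comp_def] using this
  have hfin : c ≤ S * v := by
    have := ge_of_tendsto' htend hcle
    simpa using this
  rw [ENNReal.div_le_iff_le_mul (Or.inl hv0) (Or.inl hvt)]
  exact hfin

lemma measurable_hlMaximal (f : (Fin n → ℝ) → ℝ≥0∞) : Measurable (hlMaximal f) := by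
  have : hlMaximal f = hlMaximalQ f := funext fun x => hlMaximal_eq_Q f x
  rw [this]; exact measurable_hlMaximalQ f

lemma keyA {q : ℝ} (hq : 0 < q) {d : ℝ} (hd : 0 < d) :
    ∫⁻ t in Ioi (0:ℝ), (if t < d then ENNReal.ofReal (t ^ (q - 1)) else 0)
      = ENNReal.ofReal (d ^ q / q) := by
  have e1 : (fun t : ℝ => if t < d then ENNReal.ofReal (t ^ (q - 1)) else 0)
      = (Iio d).indicator (fun t => ENNReal.ofReal (t ^ (q - 1))) := by
    funext t; by_cases ht : t < d <;> simp [indicator_apply, mem_Iio, ht]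
  rw [e1, lintegral_indicator measurableSet_Iio, Measure.restrict_restrict measurableSet_Iio]
  have e2 : Iio d ∩ Ioi 0 = Ioo (0:ℝ) d := by ext t; simp [mem_Ioo, and_comm]
  rw [e2]
  have hint : IntegrableOn (fun t : ℝ => t ^ (q - 1)) (Ioo 0 d) volume := by
    have := (intervalIntegral.intervalIntegrable_rpow' (by linarith : (-1:ℝ) < q - 1)
      (a := 0) (b := d)).1
    exact this.mono_set Ioo_subset_Ioc_self
  rw [← ofReal_integral_eq_lintegral_ofReal hint ?nn]
  case nn =>
    filter_upwards [ae_restrict_mem measurableSet_Ioo] with t ht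
    exact Real.rpow_nonneg ht.1.le _
  congr 1
  rw [← integral_Ioc_eq_integral_Ioo, ← intervalIntegral.integral_of_le hd.le,
    integral_rpow (Or.inl (by linarith : (-1:ℝ) < q - 1))]
  have : q - 1 + 1 = q := by ring
  rw [this, Real.zero_rpow hq.ne']
  ring

lemma keyB {q : ℝ} (hq : 0 < q) :
    ∫⁻ t in Ioi (0:ℝ), ENNReal.ofReal (t ^ (q - 1)) = ⊤ := by
  rw [eq_top_iff]
  have h1 : ∀ j : ℕ, ENNReal.ofReal (((j:ℝ) + 1) ^ q / q)
      ≤ ∫⁻ t in Ioi (0:ℝ), ENNReal.ofReal (t ^ (q - 1)) := by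
    intro j
    rw [← keyA hq (by positivity : (0:ℝ) < (j:ℝ) + 1)]
    refine lintegral_mono fun t => ?_
    by_cases ht : t < (j:ℝ) + 1 <;> simp [ht]
  have h2 : (⨆ j : ℕ, ENNReal.ofReal (((j:ℝ) + 1) ^ q / q)) = ⊤ := by
    rw [iSup_eq_top]
    intro b hb
    obtain ⟨j, hj⟩ := exists_nat_ge ((max 0 (b.toReal * q)) ^ q⁻¹)
    refine ⟨j, ?_⟩
    have hBnn : (0:ℝ) ≤ max 0 (b.toReal * q) := le_max_left _ _
    have hlt : max 0 (b.toReal * q) < ((j:ℝ) + 1) ^ q := by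
      calc max 0 (b.toReal * q) = ((max 0 (b.toReal * q)) ^ q⁻¹) ^ q := by
            rw [Real.rpow_inv_rpow hBnn hq.ne']
      _ < ((j:ℝ) + 1) ^ q :=
          Real.rpow_lt_rpow (Real.rpow_nonneg hBnn _) (by linarith) hq
    have hbt : b.toReal < ((j:ℝ) + 1) ^ q / q := by
      rw [lt_div_iff₀ hq]
      exact lt_of_le_of_lt (le_max_right _ _) hlt
    calc b = ENNReal.ofReal b.toReal := (ENNReal.ofReal_toReal hb.ne).symm
    _ < ENNReal.ofReal (((j:ℝ) + 1) ^ q / q) := by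
        rw [ENNReal.ofReal_lt_ofReal_iff (by positivity)]
        exact hbt
  rw [← h2]
  exact iSup_le h1

lemma lintegral_indicator_rpow {q : ℝ} (hq : 0 < q) (c : ℝ≥0∞) :
    ∫⁻ t in Ioi (0:ℝ), (if ENNReal.ofReal t < c then ENNReal.ofReal (t ^ (q - 1)) else 0)
      = c ^ q / ENNReal.ofReal q := by
  by_cases hctop : c = ⊤
  · subst hctop
    have e : ∀ t : ℝ, (if ENNReal.ofReal t < (⊤:ℝ≥0∞) then ENNReal.ofReal (t ^ (q - 1)) else 0)
        = ENNReal.ofReal (t ^ (q - 1)) := fun t => by simp [ofReal_lt_top]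
    simp only [e]
    rw [keyB hq, ENNReal.top_rpow_of_pos hq, ENNReal.top_div_of_ne_top ofReal_ne_top]
  by_cases hc0 : c = 0
  · subst hc0
    simp [ENNReal.zero_rpow_of_pos hq]
  have hd : 0 < c.toReal := ENNReal.toReal_pos hc0 hctop
  have e : ∫⁻ t in Ioi (0:ℝ),
      (if ENNReal.ofReal t < c then ENNReal.ofReal (t ^ (q - 1)) else 0)
      = ∫⁻ t in Ioi (0:ℝ), (if t < c.toReal then ENNReal.ofReal (t ^ (q - 1)) else 0) := by
    refine setLIntegral_congr_fun measurableSet_Ioi (fun t ht => ?_)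
    have : ENNReal.ofReal t < c ↔ t < c.toReal :=
      ENNReal.ofReal_lt_iff_lt_toReal (le_of_lt ht) hctop
    simp only [this]
  rw [e, keyA hq hd, ENNReal.ofReal_div_of_pos hq, ← ENNReal.ofReal_rpow_of_pos hd,
    ENNReal.ofReal_toReal hctop]

lemma weak_type {f g : (Fin n → ℝ) → ℝ≥0∞} (hf : Measurable f) (hg : Measurable g)
    (α : ℝ≥0∞) :
    α * ∫⁻ x in {x | α < hlMaximal f x}, g x ≤ 5 ^ n * ∫⁻ x, f x * hlMaximal g x := by
  classical
  set μg := volume.withDensity g with hμg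
  set ν := volume.withDensity (fun x => f x * hlMaximal g x) with hν
  set T : ℝ → Set ((Fin n → ℝ) × ℝ) := fun R =>
    {z | 0 < z.2 ∧ z.2 ≤ R ∧ α * volume (Cube z.1 z.2) < ∫⁻ y in Cube z.1 z.2, f y} with hT
  set S : ℕ → Set (Fin n → ℝ) := fun j => ⋃ z ∈ T j, Cube z.1 z.2 with hSdef
  -- Claim 1
  have claim1 : {x | α < hlMaximal f x} ⊆ ⋃ j : ℕ, S j := by
    intro x hx
    simp only [mem_setOf_eq, hlMaximal, lt_iSup_iff] at hx
    obtain ⟨a, h, hh, hxQ, hlt⟩ := hx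
    have hmul : α * volume (Cube a h) < ∫⁻ y in Cube a h, f y := by
      rw [ENNReal.lt_div_iff_mul_lt (Or.inl (vol_cube_pos a hh).ne')
        (Or.inl (vol_cube_ne_top a hh.le))] at hlt
      exact hlt
    refine mem_iUnion.2 ⟨⌈h⌉₊, ?_⟩
    exact mem_biUnion (show (a, h) ∈ T (⌈h⌉₊ : ℝ) from ⟨hh, Nat.le_ceil h, hmul⟩) hxQ
  -- Claim 2
  have claim2 : ∀ j : ℕ, α * μg (S j) ≤ 5 ^ n * ν univ := by
    intro j
    obtain ⟨u, hut, hdisj, hcov⟩ :=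
      Vitali.exists_disjoint_subfamily_covering_enlargement_closedBall (T j)
        (fun z => fun i => z.1 i + z.2 / 2) (fun z => z.2 / 2) ((j : ℝ) / 2)
        (fun z hz => by have := hz.2.1; linarith) 5 (by norm_num)
    have hQball : ∀ z : (Fin n → ℝ) × ℝ, 0 < z.2 →
        Metric.closedBall (fun i => z.1 i + z.2 / 2) (z.2 / 2) = Cube z.1 z.2 :=
      fun z hz => (cube_eq_closedBall z.1 hz.le).symm
    set E : (Fin n → ℝ) × ℝ → Set (Fin n → ℝ) := fun b =>
      Metric.closedBall (fun i => b.1 i + b.2 / 2) (5 * (b.2 / 2)) with hE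
    have hEcube : ∀ b : (Fin n → ℝ) × ℝ, 0 < b.2 →
        E b = Cube (fun i => (b.1 i + b.2 / 2) - 5 * (b.2 / 2)) (2 * (5 * (b.2 / 2))) :=
      fun b hb => closedBall_eq_cube _ (by linarith)
    have hvolE : ∀ b : (Fin n → ℝ) × ℝ, 0 < b.2 →
        volume (E b) = 5 ^ n * volume (Cube b.1 b.2) := by
      intro b hb
      rw [hEcube b hb, volume_cube _ (by linarith), volume_cube _ hb.le]
      have : (2 * (5 * (b.2 / 2))) = 5 * b.2 := by ring
      rw [this, ENNReal.ofReal_mul (by norm_num), mul_pow]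
      norm_num
    have hucount : u.Countable := by
      refine hdisj.countable_of_nonempty_interior fun b hb => ?_
      have hb2 : 0 < b.2 := (hut hb).1
      exact (Metric.nonempty_ball.2 (by linarith : 0 < b.2 / 2)).mono
        Metric.ball_subset_interior_closedBall
    -- covering
    have hScov : S j ⊆ ⋃ b ∈ u, E b := by
      intro x hx
      obtain ⟨z, hz, hxz⟩ := mem_iUnion₂.1 hx
      obtain ⟨b, hb, hsub⟩ := hcov z hz
      refine mem_iUnion₂.2 ⟨b, hb, hsub ?_⟩
      rw [hQball z hz.1]
      exact hxz
    -- per-ball estimate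
    have hball : ∀ b ∈ u, α * μg (E b) ≤ 5 ^ n * ν (Cube b.1 b.2) := by
      intro b hb
      have hbT := hut hb
      have hb2 : 0 < b.2 := hbT.1
      have hsE : 0 < 2 * (5 * (b.2 / 2)) := by linarith
      have hQE : Cube b.1 b.2 ⊆ E b := by
        rw [← hQball b hb2]
        exact Metric.closedBall_subset_closedBall (by linarith)
      have hMg : ∀ y ∈ Cube b.1 b.2, μg (E b) / volume (E b) ≤ hlMaximal g y := by
        intro y hy
        have hyE : y ∈ Cube (fun i => b.1 i + b.2 / 2 - 5 * (b.2 / 2)) (2 * (5 * (b.2 / 2))) := by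
          rw [← hEcube b hb2]; exact hQE hy
        rw [hEcube b hb2, hμg, withDensity_apply _ (measurableSet_cube _ _)]
        exact avg_le_hlMaximal g hsE hyE
      have hνQ : (μg (E b) / volume (E b)) * (α * volume (Cube b.1 b.2)) ≤ ν (Cube b.1 b.2) := by
        rw [hν, withDensity_apply _ (measurableSet_cube _ _)]
        calc (μg (E b) / volume (E b)) * (α * volume (Cube b.1 b.2))
            ≤ (μg (E b) / volume (E b)) * ∫⁻ y in Cube b.1 b.2, f y :=
              mul_le_mul_right hbT.2.2.le _
          _ = ∫⁻ y in Cube b.1 b.2, f y * (μg (E b) / volume (E b)) := by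
              rw [lintegral_mul_const _ hf, mul_comm]
          _ ≤ ∫⁻ y in Cube b.1 b.2, f y * hlMaximal g y := by
              refine setLIntegral_mono' (measurableSet_cube _ _) fun y hy => ?_
              exact mul_le_mul_right (hMg y hy) _
      have hEvol0 : volume (E b) ≠ 0 := by
        rw [hEcube b hb2]; exact (vol_cube_pos _ hsE).ne'
      have hEvolt : volume (E b) ≠ ⊤ := by
        rw [hEcube b hb2]; exact vol_cube_ne_top _ hsE.le
      calc α * μg (E b) = α * ((μg (E b) / volume (E b)) * volume (E b)) := by
            rw [ENNReal.div_mul_cancel hEvol0 hEvolt]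
        _ = α * ((μg (E b) / volume (E b)) * (5 ^ n * volume (Cube b.1 b.2))) := by
            rw [hvolE b hb2]
        _ = 5 ^ n * ((μg (E b) / volume (E b)) * (α * volume (Cube b.1 b.2))) := by ring
        _ ≤ 5 ^ n * ν (Cube b.1 b.2) := mul_le_mul_right hνQ _
    -- summing
    have hdisjQ : u.PairwiseDisjoint fun b : (Fin n → ℝ) × ℝ => Cube b.1 b.2 := by
      intro b hb c hc hbc
      have := hdisj hb hc hbc
      rwa [Function.onFun, hQball b (hut hb).1, hQball c (hut hc).1] at this
    calc α * μg (S j) ≤ α * ∑' b : u, μg (E b) :=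
          mul_le_mul_right ((measure_mono hScov).trans (measure_biUnion_le μg hucount E)) α
      _ = ∑' b : u, α * μg (E b) := ENNReal.tsum_mul_left.symm
      _ ≤ ∑' b : u, 5 ^ n * ν (Cube (b : (Fin n → ℝ) × ℝ).1 (b : (Fin n → ℝ) × ℝ).2) :=
          ENNReal.tsum_le_tsum fun b => hball b b.2
      _ = 5 ^ n * ∑' b : u, ν (Cube (b : (Fin n → ℝ) × ℝ).1 (b : (Fin n → ℝ) × ℝ).2) :=
          ENNReal.tsum_mul_left
      _ = 5 ^ n * ν (⋃ b ∈ u, Cube b.1 b.2) := by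
          rw [measure_biUnion hucount hdisjQ fun b _ => measurableSet_cube _ _]
      _ ≤ 5 ^ n * ν univ := mul_le_mul_right (measure_mono (subset_univ _)) _
  -- combine
  have hSmono : Monotone S := by
    intro j k hjk x hx
    obtain ⟨z, hz, hxz⟩ := mem_iUnion₂.1 hx
    exact mem_biUnion ⟨hz.1, hz.2.1.trans (by exact_mod_cast Nat.cast_le.2 hjk), hz.2.2⟩ hxz
  have hmeas : MeasurableSet {x | α < hlMaximal f x} :=
    measurableSet_lt measurable_const (measurable_hlMaximal f)
  have hset : (∫⁻ x in {x | α < hlMaximal f x}, g x) = μg {x | α < hlMaximal f x} :=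
    (withDensity_apply _ hmeas).symm
  rw [hset]
  calc α * μg {x | α < hlMaximal f x} ≤ α * μg (⋃ j, S j) :=
        mul_le_mul_right (measure_mono claim1) α
    _ = α * ⨆ j, μg (S j) := by rw [hSmono.measure_iUnion]
    _ = ⨆ j, α * μg (S j) := ENNReal.mul_iSup α fun j => μg (S j)
    _ ≤ 5 ^ n * ν univ := iSup_le claim2
    _ = 5 ^ n * ∫⁻ x, f x * hlMaximal g x := by
        rw [hν, ← setLIntegral_univ, withDensity_apply _ MeasurableSet.univ]

lemma rpow_split {p : ℝ} (hp : 1 < p) (c : ℝ≥0∞) : c * c ^ (p - 1) = c ^ p := by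
  rcases eq_or_ne c 0 with rfl | h0
  · rw [ENNReal.zero_rpow_of_pos (by linarith), ENNReal.zero_rpow_of_pos (by linarith), mul_zero]
  rcases eq_or_ne c ⊤ with rfl | ht
  · rw [ENNReal.top_rpow_of_pos (by linarith), ENNReal.top_rpow_of_pos (by linarith), top_mul_top]
  · conv_rhs => rw [show p = 1 + (p - 1) by ring]
    rw [ENNReal.rpow_add _ _ h0 ht, ENNReal.rpow_one]

def fsC (n : ℕ) (p : ℝ) : ℝ≥0∞ :=
  ENNReal.ofReal p * 2 * 5 ^ n * ((2 : ℝ≥0∞) ^ (p - 1) / ENNReal.ofReal (p - 1))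

lemma fsC_ne_top {p : ℝ} (hp : 1 < p) : fsC n p ≠ ⊤ := by
  have h1 : (2 : ℝ≥0∞) ^ (p - 1) / ENNReal.ofReal (p - 1) ≠ ⊤ :=
    (ENNReal.div_lt_top (ENNReal.rpow_ne_top_of_nonneg (by linarith) (by norm_num))
      (by simp [ENNReal.ofReal_eq_zero]; linarith)).ne
  exact ENNReal.mul_ne_top (ENNReal.mul_ne_top
    (ENNReal.mul_ne_top ENNReal.ofReal_ne_top (by norm_num))
    (ENNReal.pow_ne_top (by norm_num))) h1

theorem fs_ineq {p : ℝ} (hp : 1 < p) {f g : (Fin n → ℝ) → ℝ≥0∞}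
    (hf : Measurable f) (hg : Measurable g) :
    ∫⁻ x, hlMaximal f x ^ p * g x ≤ fsC n p * ∫⁻ x, f x ^ p * hlMaximal g x := by
  classical
  set Mf := hlMaximal f with hMf
  set Mg := hlMaximal g with hMg
  set f₁ : ℝ → (Fin n → ℝ) → ℝ≥0∞ :=
    fun t x => if ENNReal.ofReal t < 2 * f x then f x else 0 with hf₁
  have hf₁meas : ∀ t, Measurable (f₁ t) := fun t =>
    Measurable.ite (measurableSet_lt measurable_const (hg := hf.const_mul 2)) hf measurable_const
  -- Step 1: pointwise split
  have step1 : ∀ t : ℝ, 0 < t → ∀ x,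
      Mf x ≤ hlMaximal (f₁ t) x + ENNReal.ofReal (t / 2) := by
    intro t ht x
    have hsplit : f = fun y => f₁ t y + (if ENNReal.ofReal t < 2 * f y then 0 else f y) := by
      funext y; by_cases hy : ENNReal.ofReal t < 2 * f y <;> simp [hf₁, hy]
    have h2 : ∀ y, (if ENNReal.ofReal t < 2 * f y then 0 else f y) ≤ ENNReal.ofReal (t / 2) := by
      intro y
      by_cases hy : ENNReal.ofReal t < 2 * f y
      · simp [hy]
      · simp only [hy, if_false]
        push_neg at hy
        rw [ENNReal.ofReal_div_of_pos (by norm_num : (0:ℝ) < 2)]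
        rw [ENNReal.le_div_iff_mul_le (Or.inl (by norm_num)) (Or.inl (by simp))]
        calc f y * ENNReal.ofReal 2 = 2 * f y := by
              rw [mul_comm]; norm_num
        _ ≤ ENNReal.ofReal t := hy
    calc Mf x = hlMaximal (fun y => f₁ t y + (if ENNReal.ofReal t < 2 * f y then 0 else f y)) x :=
          congrArg (fun F => hlMaximal F x) hsplit
    _ ≤ hlMaximal (f₁ t) x + hlMaximal (fun y => if ENNReal.ofReal t < 2 * f y then 0 else f y) x :=
        hlMaximal_add_le (hf₁meas t) x
    _ ≤ hlMaximal (f₁ t) x + ENNReal.ofReal (t / 2) :=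
        add_le_add le_rfl (hlMaximal_le_const h2 x)
  -- Step 2: level sets
  have step2 : ∀ t : ℝ, 0 < t →
      {x | ENNReal.ofReal t < Mf x} ⊆ {x | ENNReal.ofReal (t / 2) < hlMaximal (f₁ t) x} := by
    intro t ht x hx
    simp only [mem_setOf_eq] at hx ⊢
    have h1 : ENNReal.ofReal t < hlMaximal (f₁ t) x + ENNReal.ofReal (t / 2) :=
      lt_of_lt_of_le hx (step1 t ht x)
    have h2 : ENNReal.ofReal t = ENNReal.ofReal (t / 2) + ENNReal.ofReal (t / 2) := by
      rw [← ENNReal.ofReal_add (by linarith) (by linarith)]; norm_num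
    rw [h2] at h1
    exact (ENNReal.add_lt_add_iff_right ENNReal.ofReal_ne_top).mp h1
  set D : ℝ≥0∞ := (2 : ℝ≥0∞) ^ (p - 1) / ENNReal.ofReal (p - 1) with hD
  have hDtop : D ≠ ⊤ :=
    (ENNReal.div_lt_top (ENNReal.rpow_ne_top_of_nonneg (by linarith) (by norm_num))
      (by simp [ENNReal.ofReal_eq_zero]; linarith)).ne
  have hp0 : (0:ℝ) < p := by linarith
  have hofp0 : ENNReal.ofReal p ≠ 0 := by simp [ENNReal.ofReal_eq_zero]; linarith
  -- Layer cake pointwise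
  have hpt : ∀ x, Mf x ^ p * g x =
      ENNReal.ofReal p * ((∫⁻ t in Ioi (0:ℝ),
        if ENNReal.ofReal t < Mf x then ENNReal.ofReal (t ^ (p - 1)) else 0) * g x) := by
    intro x
    rw [lintegral_indicator_rpow hp0 (Mf x), ← mul_assoc,
      ENNReal.mul_div_cancel hofp0 ENNReal.ofReal_ne_top]
  -- kernel measurability
  have hK1meas : Measurable (fun z : (Fin n → ℝ) × ℝ =>
      (if ENNReal.ofReal z.2 < Mf z.1 then ENNReal.ofReal (z.2 ^ (p - 1)) else 0) * g z.1) := by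
    refine Measurable.mul ?_ (hg.comp measurable_fst)
    refine Measurable.ite ?_ ((measurable_snd.pow_const (p - 1)).ennreal_ofReal)
      measurable_const
    exact measurableSet_lt (ENNReal.measurable_ofReal.comp measurable_snd)
      ((measurable_hlMaximal f).comp measurable_fst)
  have hinner : ∀ t : ℝ, (∫⁻ x, (if ENNReal.ofReal t < Mf x then
        ENNReal.ofReal (t ^ (p - 1)) else 0) * g x)
      = ENNReal.ofReal (t ^ (p - 1)) * ∫⁻ x in {x | ENNReal.ofReal t < Mf x}, g x := by
    intro t
    have e : (fun x => (if ENNReal.ofReal t < Mf x then ENNReal.ofReal (t ^ (p - 1)) else 0) * g x)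
        = {x | ENNReal.ofReal t < Mf x}.indicator
          (fun x => ENNReal.ofReal (t ^ (p - 1)) * g x) := by
      funext x; by_cases hx : ENNReal.ofReal t < Mf x <;> simp [indicator_apply, hx]
    rw [e, lintegral_indicator (measurableSet_lt measurable_const (measurable_hlMaximal f)),
      lintegral_const_mul' _ _ ENNReal.ofReal_ne_top]
  -- first transformation
  have hA : ∫⁻ x, Mf x ^ p * g x = ENNReal.ofReal p * ∫⁻ t in Ioi (0:ℝ),
      ENNReal.ofReal (t ^ (p - 1)) * ∫⁻ x in {x | ENNReal.ofReal t < Mf x}, g x := by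
    calc ∫⁻ x, Mf x ^ p * g x
        = ∫⁻ x, ENNReal.ofReal p * ((∫⁻ t in Ioi (0:ℝ),
            if ENNReal.ofReal t < Mf x then ENNReal.ofReal (t ^ (p - 1)) else 0) * g x) := by
          exact lintegral_congr hpt
      _ = ENNReal.ofReal p * ∫⁻ x, (∫⁻ t in Ioi (0:ℝ),
            if ENNReal.ofReal t < Mf x then ENNReal.ofReal (t ^ (p - 1)) else 0) * g x :=
          lintegral_const_mul' _ _ ENNReal.ofReal_ne_top
      _ = ENNReal.ofReal p * ∫⁻ x, ∫⁻ t in Ioi (0:ℝ),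
            (if ENNReal.ofReal t < Mf x then ENNReal.ofReal (t ^ (p - 1)) else 0) * g x := by
          congr 1
          refine lintegral_congr fun x => ?_
          exact (lintegral_mul_const _ (Measurable.ite
            (measurableSet_lt ENNReal.measurable_ofReal measurable_const)
            ((measurable_id.pow_const (p - 1)).ennreal_ofReal) measurable_const)).symm
      _ = ENNReal.ofReal p * ∫⁻ t in Ioi (0:ℝ), ∫⁻ x,
            (if ENNReal.ofReal t < Mf x then ENNReal.ofReal (t ^ (p - 1)) else 0) * g x := by
          congr 1
          exact lintegral_lintegral_swap hK1meas.aemeasurable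
      _ = ENNReal.ofReal p * ∫⁻ t in Ioi (0:ℝ),
            ENNReal.ofReal (t ^ (p - 1)) * ∫⁻ x in {x | ENNReal.ofReal t < Mf x}, g x := by
          congr 1
          exact lintegral_congr hinner
  -- per-t estimate
  have key_t : ∀ t ∈ Ioi (0:ℝ),
      ENNReal.ofReal (t ^ (p - 1)) * ∫⁻ x in {x | ENNReal.ofReal t < Mf x}, g x
      ≤ (2 * 5 ^ n) * (ENNReal.ofReal (t ^ (p - 2)) * ∫⁻ x, f₁ t x * Mg x) := by
    intro t ht
    rw [mem_Ioi] at ht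
    have hα0 : ENNReal.ofReal (t / 2) ≠ 0 := by simp [ENNReal.ofReal_eq_zero]; linarith
    have hwt := weak_type (n := n) (hf₁meas t) hg (ENNReal.ofReal (t / 2))
    have hmono : ∫⁻ x in {x | ENNReal.ofReal t < Mf x}, g x
        ≤ ∫⁻ x in {x | ENNReal.ofReal (t / 2) < hlMaximal (f₁ t) x}, g x :=
      lintegral_mono' (Measure.restrict_mono (step2 t ht) le_rfl) le_rfl
    have hI : ∫⁻ x in {x | ENNReal.ofReal (t / 2) < hlMaximal (f₁ t) x}, g x
        ≤ (ENNReal.ofReal (t / 2))⁻¹ * (5 ^ n * ∫⁻ x, f₁ t x * Mg x) := by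
      calc ∫⁻ x in {x | ENNReal.ofReal (t / 2) < hlMaximal (f₁ t) x}, g x
          = (ENNReal.ofReal (t / 2))⁻¹ * (ENNReal.ofReal (t / 2) *
            ∫⁻ x in {x | ENNReal.ofReal (t / 2) < hlMaximal (f₁ t) x}, g x) := by
            rw [← mul_assoc, ENNReal.inv_mul_cancel hα0 ENNReal.ofReal_ne_top, one_mul]
        _ ≤ (ENNReal.ofReal (t / 2))⁻¹ * (5 ^ n * ∫⁻ x, f₁ t x * Mg x) :=
            mul_le_mul_right hwt _
    have hreal : t ^ (p - 1) * (t / 2)⁻¹ = 2 * t ^ (p - 2) := by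
      have h1 : t ^ (p - 1) = t ^ (p - 2) * t := by
        rw [show p - 1 = (p - 2) + 1 by ring, Real.rpow_add ht, Real.rpow_one]
      rw [h1]
      field_simp
    calc ENNReal.ofReal (t ^ (p - 1)) * ∫⁻ x in {x | ENNReal.ofReal t < Mf x}, g x
        ≤ ENNReal.ofReal (t ^ (p - 1)) *
            ((ENNReal.ofReal (t / 2))⁻¹ * (5 ^ n * ∫⁻ x, f₁ t x * Mg x)) :=
          mul_le_mul_right (hmono.trans hI) _
      _ = (ENNReal.ofReal (t ^ (p - 1)) * (ENNReal.ofReal (t / 2))⁻¹) *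
            (5 ^ n * ∫⁻ x, f₁ t x * Mg x) := (mul_assoc _ _ _).symm
      _ = (2 * 5 ^ n) * (ENNReal.ofReal (t ^ (p - 2)) * ∫⁻ x, f₁ t x * Mg x) := by
          rw [← ENNReal.ofReal_inv_of_pos (by linarith : (0:ℝ) < t / 2),
            ← ENNReal.ofReal_mul (Real.rpow_nonneg ht.le _), hreal,
            ENNReal.ofReal_mul (by norm_num : (0:ℝ) ≤ 2)]
          have h2 : ENNReal.ofReal (2:ℝ) = 2 := by norm_num
          rw [h2, mul_assoc, ← mul_assoc (ENNReal.ofReal (t ^ (p - 2))), mul_comm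
            (ENNReal.ofReal (t ^ (p - 2))) ((5:ℝ≥0∞) ^ n), mul_assoc, ← mul_assoc (2:ℝ≥0∞)]
  -- second kernel
  have hJ : ∀ t : ℝ, ENNReal.ofReal (t ^ (p - 2)) * ∫⁻ x, f₁ t x * Mg x
      = ∫⁻ x, (if ENNReal.ofReal t < 2 * f x then
          ENNReal.ofReal (t ^ (p - 2)) * (f x * Mg x) else 0) := by
    intro t
    rw [← lintegral_const_mul' _ _ ENNReal.ofReal_ne_top]
    refine lintegral_congr fun x => ?_
    by_cases hx : ENNReal.ofReal t < 2 * f x <;> simp [hf₁, hx]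
  have hK2meas : Measurable (fun z : ℝ × (Fin n → ℝ) =>
      if ENNReal.ofReal z.1 < 2 * f z.2 then
        ENNReal.ofReal (z.1 ^ (p - 2)) * (f z.2 * Mg z.2) else 0) := by
    refine Measurable.ite ?_ ?_ measurable_const
    · exact measurableSet_lt (ENNReal.measurable_ofReal.comp measurable_fst)
        ((hf.comp measurable_snd).const_mul 2)
    · exact ((measurable_fst.pow_const (p - 2)).ennreal_ofReal).mul
        ((hf.comp measurable_snd).mul ((measurable_hlMaximal g).comp measurable_snd))
  have hinner2 : ∀ x, (∫⁻ t in Ioi (0:ℝ), (if ENNReal.ofReal t < 2 * f x then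
        ENNReal.ofReal (t ^ (p - 2)) * (f x * Mg x) else 0))
      = (f x * Mg x) * ((2 * f x) ^ (p - 1) / ENNReal.ofReal (p - 1)) := by
    intro x
    have e : ∀ t : ℝ, (if ENNReal.ofReal t < 2 * f x then
        ENNReal.ofReal (t ^ (p - 2)) * (f x * Mg x) else 0)
        = (f x * Mg x) * (if ENNReal.ofReal t < 2 * f x then
            ENNReal.ofReal (t ^ (p - 1 - 1)) else 0) := by
      intro t
      have : p - 1 - 1 = p - 2 := by ring
      rw [this]
      by_cases htx : ENNReal.ofReal t < 2 * f x <;> simp [htx, mul_comm]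
    calc (∫⁻ t in Ioi (0:ℝ), (if ENNReal.ofReal t < 2 * f x then
          ENNReal.ofReal (t ^ (p - 2)) * (f x * Mg x) else 0))
        = ∫⁻ t in Ioi (0:ℝ), (f x * Mg x) * (if ENNReal.ofReal t < 2 * f x then
            ENNReal.ofReal (t ^ (p - 1 - 1)) else 0) := lintegral_congr e
      _ = (f x * Mg x) * ∫⁻ t in Ioi (0:ℝ), (if ENNReal.ofReal t < 2 * f x then
            ENNReal.ofReal (t ^ (p - 1 - 1)) else 0) :=
          lintegral_const_mul _ (Measurable.ite
            (measurableSet_lt ENNReal.measurable_ofReal measurable_const)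
            ((measurable_id.pow_const (p - 1 - 1)).ennreal_ofReal) measurable_const)
      _ = (f x * Mg x) * ((2 * f x) ^ (p - 1) / ENNReal.ofReal (p - 1)) := by
          rw [lintegral_indicator_rpow (by linarith : (0:ℝ) < p - 1) (2 * f x)]
  have hfinal : ∀ x, (f x * Mg x) * ((2 * f x) ^ (p - 1) / ENNReal.ofReal (p - 1))
      = D * (f x ^ p * Mg x) := by
    intro x
    rw [ENNReal.mul_rpow_of_nonneg _ _ (by linarith : (0:ℝ) ≤ p - 1),
      ← rpow_split hp (f x), hD]
    simp only [div_eq_mul_inv]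
    ring
  have h25top : (2 * 5 ^ n : ℝ≥0∞) ≠ ⊤ :=
    ENNReal.mul_ne_top (by norm_num) (ENNReal.pow_ne_top (by norm_num))
  calc ∫⁻ x, Mf x ^ p * g x
      = ENNReal.ofReal p * ∫⁻ t in Ioi (0:ℝ),
          ENNReal.ofReal (t ^ (p - 1)) * ∫⁻ x in {x | ENNReal.ofReal t < Mf x}, g x := hA
    _ ≤ ENNReal.ofReal p * ∫⁻ t in Ioi (0:ℝ),
          (2 * 5 ^ n) * (ENNReal.ofReal (t ^ (p - 2)) * ∫⁻ x, f₁ t x * Mg x) :=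
        mul_le_mul_right (setLIntegral_mono' measurableSet_Ioi key_t) _
    _ = ENNReal.ofReal p * ((2 * 5 ^ n) * ∫⁻ t in Ioi (0:ℝ),
          ENNReal.ofReal (t ^ (p - 2)) * ∫⁻ x, f₁ t x * Mg x) := by
        rw [lintegral_const_mul' _ _ h25top]
    _ = ENNReal.ofReal p * ((2 * 5 ^ n) * ∫⁻ t in Ioi (0:ℝ), ∫⁻ x,
          (if ENNReal.ofReal t < 2 * f x then
            ENNReal.ofReal (t ^ (p - 2)) * (f x * Mg x) else 0)) := by
        congr 2
        exact lintegral_congr hJ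
    _ = ENNReal.ofReal p * ((2 * 5 ^ n) * ∫⁻ x, ∫⁻ t in Ioi (0:ℝ),
          (if ENNReal.ofReal t < 2 * f x then
            ENNReal.ofReal (t ^ (p - 2)) * (f x * Mg x) else 0)) := by
        congr 2
        exact lintegral_lintegral_swap hK2meas.aemeasurable
    _ = ENNReal.ofReal p * ((2 * 5 ^ n) * ∫⁻ x, D * (f x ^ p * Mg x)) := by
        congr 2
        refine lintegral_congr fun x => ?_
        rw [hinner2 x, hfinal x]
    _ = ENNReal.ofReal p * ((2 * 5 ^ n) * (D * ∫⁻ x, f x ^ p * Mg x)) := by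
        rw [lintegral_const_mul' _ _ hDtop]
    _ = fsC n p * ∫⁻ x, f x ^ p * Mg x := by
        rw [show fsC n p = ENNReal.ofReal p * 2 * 5 ^ n * D by rw [fsC, hD]]
        ring


end Aux

/-- **Proposition 4.1(iii)**: if `M` is bounded on `X`, then `M` is bounded on `(X')^r`
for all `r ∈ (0,1)`. -/
theorem maximalBounded_assoc_powNorm_of_lt_one
    (n : ℕ) (hn : 0 < n) (X : BanachFunctionSpace n)
    (hM : MaximalBounded X.ρ) :
    ∀ r ∈ Set.Ioo (0 : ℝ) 1, MaximalBounded (powNorm (assocNorm X.ρ) r) := by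
  intro r hr
  obtain ⟨hr0, hr1⟩ := hr
  obtain ⟨C₀, hC⟩ := hM
  set Cm : ℝ≥0 := max C₀ 1 with hCmdef
  have hCmpos : (0:ℝ≥0) < Cm := lt_of_lt_of_le one_pos (le_max_right _ _)
  have hCm0 : Cm ≠ 0 := hCmpos.ne'
  have hCm : ∀ f : (Fin n → ℝ) → ℝ≥0∞, Measurable f →
      X.ρ (hlMaximal f) ≤ (Cm : ℝ≥0∞) * X.ρ f := fun f hf =>
    (hC f hf).trans (mul_le_mul_left (by exact_mod_cast le_max_left C₀ 1) _)
  have hp : 1 < 1 / r := by rw [lt_div_iff₀ hr0, one_mul]; exact hr1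
  set K : ℝ≥0∞ := fsC n (1 / r) * (Cm : ℝ≥0∞) with hK
  have hKtop : K ≠ ⊤ := ENNReal.mul_ne_top (fsC_ne_top hp) ENNReal.coe_ne_top
  have hKrtop : K ^ r ≠ ⊤ := ENNReal.rpow_ne_top_of_nonneg hr0.le hKtop
  refine ⟨(K ^ r).toNNReal, ?_⟩
  intro f hf
  have key : assocNorm X.ρ (fun x => hlMaximal f x ^ (1 / r))
      ≤ K * assocNorm X.ρ (fun x => f x ^ (1 / r)) := by
    refine iSup_le fun g => iSup_le fun hg => iSup_le fun hg1 => ?_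
    set g' : (Fin n → ℝ) → ℝ≥0∞ := fun x => ((Cm : ℝ≥0∞))⁻¹ * hlMaximal g x with hg'
    have hg'meas : Measurable g' := (measurable_hlMaximal g).const_mul _
    have hρg' : X.ρ g' ≤ 1 := by
      have e : X.ρ g' = ((Cm : ℝ≥0∞))⁻¹ * X.ρ (hlMaximal g) := by
        have := X.smul_eq Cm⁻¹ (hlMaximal g) (measurable_hlMaximal g)
        rw [ENNReal.coe_inv hCm0] at this
        exact this
      rw [e]
      calc ((Cm : ℝ≥0∞))⁻¹ * X.ρ (hlMaximal g)
          ≤ ((Cm : ℝ≥0∞))⁻¹ * ((Cm : ℝ≥0∞) * X.ρ g) := mul_le_mul_right (hCm g hg) _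
        _ = X.ρ g := by
            rw [← mul_assoc, ENNReal.inv_mul_cancel (by exact_mod_cast hCm0)
              ENNReal.coe_ne_top, one_mul]
        _ ≤ 1 := hg1
    have h3 : ∫⁻ x, f x ^ (1 / r) * hlMaximal g x
        = (Cm : ℝ≥0∞) * ∫⁻ x, f x ^ (1 / r) * g' x := by
      rw [← lintegral_const_mul' _ _ ENNReal.coe_ne_top]
      refine lintegral_congr fun x => ?_
      rw [hg']
      calc f x ^ (1 / r) * hlMaximal g x
          = ((Cm : ℝ≥0∞) * ((Cm : ℝ≥0∞))⁻¹) * (f x ^ (1 / r) * hlMaximal g x) := by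
            rw [ENNReal.mul_inv_cancel (by exact_mod_cast hCm0) ENNReal.coe_ne_top, one_mul]
        _ = (Cm : ℝ≥0∞) * (f x ^ (1 / r) * (((Cm : ℝ≥0∞))⁻¹ * hlMaximal g x)) := by ring
    have h4 : ∫⁻ x, f x ^ (1 / r) * g' x ≤ assocNorm X.ρ (fun x => f x ^ (1 / r)) :=
      le_iSup_of_le g' (le_iSup_of_le hg'meas (le_iSup_of_le hρg' le_rfl))
    calc ∫⁻ x, hlMaximal f x ^ (1 / r) * g x
        ≤ fsC n (1 / r) * ∫⁻ x, f x ^ (1 / r) * hlMaximal g x := fs_ineq hp hf hg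
      _ = fsC n (1 / r) * ((Cm : ℝ≥0∞) * ∫⁻ x, f x ^ (1 / r) * g' x) := by rw [h3]
      _ = K * ∫⁻ x, f x ^ (1 / r) * g' x := by rw [hK, mul_assoc]
      _ ≤ K * assocNorm X.ρ (fun x => f x ^ (1 / r)) := mul_le_mul_right h4 _
  calc powNorm (assocNorm X.ρ) r (hlMaximal f)
      = (assocNorm X.ρ (fun x => hlMaximal f x ^ (1 / r))) ^ r := rfl
    _ ≤ (K * assocNorm X.ρ (fun x => f x ^ (1 / r))) ^ r :=
        ENNReal.rpow_le_rpow key hr0.le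
    _ = K ^ r * (assocNorm X.ρ (fun x => f x ^ (1 / r))) ^ r :=
        ENNReal.mul_rpow_of_nonneg _ _ hr0.le
    _ = ((K ^ r).toNNReal : ℝ≥0∞) * powNorm (assocNorm X.ρ) r f := by
        rw [ENNReal.coe_toNNReal hKrtop]; rfl

end
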